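/- arXiv:0907.1006 — 2 statements merged into one kernel-verified Lean document; each statement's English description precedes it below -/
import Mathlib

section
/- Let N ≥ 2, q > 1, let S be a relatively open Lipschitz subdomain of the unit sphere S^{N−1}, and let C_S = {x ∈ ℝ^N ∖ {0} : x/|x| ∈ S} be the open cone with vertex 0 and opening S. Let 𝒰 be the class of nonnegative solutions u of −Δu + u^q = 0 in C_S which extend continuously to C̄_S ∖ {0} and vanish on ∂C_S ∖ {0}. If U ∈ 𝒰 is maximal in 𝒰 (i.e., u ≤ U for every u ∈ 𝒰), then U(x) = a^{2/(q−1)} U(a x) for every a > 0 and x ∈ C_S; equivalently, U(x) = |x|^{−2/(q−1)} U(x/|x|) for all x ∈ C_S. (Homogeneity of the maximal solution in a cone, identity (5.18) in the proof of Theorem 5.5.) -/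
open MeasureTheory Metric Set Filter

/-- The Laplacian of a function on `ℝ^N`, as the sum of the second derivatives
in the coordinate directions. -/
noncomputable def lap {N : ℕ} (f : EuclideanSpace ℝ (Fin N) → ℝ)
    (x : EuclideanSpace ℝ (Fin N)) : ℝ :=
  ∑ i : Fin N,
    fderiv ℝ (fun y => fderiv ℝ f y (EuclideanSpace.single i 1)) x (EuclideanSpace.single i 1)

/-- The first coordinate `ξ₁` of a point of `ℝ^N`. -/
noncomputable def coordHead {N : ℕ} (ξ : EuclideanSpace ℝ (Fin N)) : ℝ :=
  if h : 0 < N then ξ ⟨0, h⟩ else 0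

/-- The remaining coordinates `ξ'` of a point of `ℝ^N`, as a point of `ℝ^{N-1}`. -/
noncomputable def coordTail {N : ℕ} (ξ : EuclideanSpace ℝ (Fin N)) :
    EuclideanSpace ℝ (Fin (N - 1)) :=
  (EuclideanSpace.equiv (Fin (N - 1)) ℝ).symm fun i =>
    ξ ⟨(i : ℕ) + 1, by have h := i.2; omega⟩

/-- A local Lipschitz graph representation of the boundary of `Ω` near the boundary point `y`:
`ψ` is a Lipschitz function with constant `lam` and `T` is an isometry of `ℝ^N` taking `y` to `0`,
such that in the cylinder `{|ξ'| < r₀, |ξ₁| < r₀}` (coordinates `ξ = T x`), the boundary of `Ω`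
is the graph `{ξ₁ = ψ(ξ')}` and `Ω` is the subgraph `{ξ₁ < ψ(ξ')}`. -/
def GraphRep {N : ℕ} (r₀ lam : ℝ) (Ω : Set (EuclideanSpace ℝ (Fin N)))
    (y : EuclideanSpace ℝ (Fin N)) (ψ : EuclideanSpace ℝ (Fin (N - 1)) → ℝ)
    (T : EuclideanSpace ℝ (Fin N) ≃ᵢ EuclideanSpace ℝ (Fin N)) : Prop :=
  (∀ a b, |ψ a - ψ b| ≤ lam * ‖a - b‖) ∧ T y = 0 ∧
    ∀ x : EuclideanSpace ℝ (Fin N),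
      ‖coordTail (T x)‖ < r₀ → |coordHead (T x)| < r₀ →
        ((x ∈ Ω ↔ coordHead (T x) < ψ (coordTail (T x))) ∧
          (x ∈ frontier Ω ↔ coordHead (T x) = ψ (coordTail (T x))))

/-- `Ω` is a bounded Lipschitz domain in `ℝ^N` with Lipschitz character `(r₀, lam)`. -/
def IsLipschitzDomain {N : ℕ} (r₀ lam : ℝ) (Ω : Set (EuclideanSpace ℝ (Fin N))) : Prop :=
  IsOpen Ω ∧ Bornology.IsBounded Ω ∧ Ω.Nonempty ∧
    ∀ y ∈ frontier Ω, ∃ ψ T, GraphRep r₀ lam Ω y ψ T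

/-- Test function supported in `Ω`. -/
def IsTest {N : ℕ} (Ω : Set (EuclideanSpace ℝ (Fin N)))
    (φ : EuclideanSpace ℝ (Fin N) → ℝ) : Prop :=
  ContDiff ℝ (⊤ : ℕ∞) φ ∧ HasCompactSupport φ ∧ tsupport φ ⊆ Ω

/-- `u` is a (distributional) solution of `-Δu + g(u) = 0` in `Ω`. -/
def IsSolution {N : ℕ} (Ω : Set (EuclideanSpace ℝ (Fin N))) (g : ℝ → ℝ)
    (u : EuclideanSpace ℝ (Fin N) → ℝ) : Prop :=
  LocallyIntegrableOn u Ω ∧ LocallyIntegrableOn (fun x => g (u x)) Ω ∧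
    ∀ φ, IsTest Ω φ → (∫ x in Ω, (-(u x) * lap φ x + g (u x) * φ x)) = 0

/-- `u` is a (distributional) supersolution of `-Δu + g(u) = 0` in `Ω`. -/
def IsSupersolution {N : ℕ} (Ω : Set (EuclideanSpace ℝ (Fin N))) (g : ℝ → ℝ)
    (u : EuclideanSpace ℝ (Fin N) → ℝ) : Prop :=
  LocallyIntegrableOn u Ω ∧ LocallyIntegrableOn (fun x => g (u x)) Ω ∧
    ∀ φ, IsTest Ω φ → (∀ x, 0 ≤ φ x) →
      0 ≤ ∫ x in Ω, (-(u x) * lap φ x + g (u x) * φ x)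

/-- `u` is a (distributional) subsolution of `-Δu + g(u) = 0` in `Ω`. -/
def IsSubsolution {N : ℕ} (Ω : Set (EuclideanSpace ℝ (Fin N))) (g : ℝ → ℝ)
    (u : EuclideanSpace ℝ (Fin N) → ℝ) : Prop :=
  LocallyIntegrableOn u Ω ∧ LocallyIntegrableOn (fun x => g (u x)) Ω ∧
    ∀ φ, IsTest Ω φ → (∀ x, 0 ≤ φ x) →
      (∫ x in Ω, (-(u x) * lap φ x + g (u x) * φ x)) ≤ 0

/-- The primitive `G(s) = ∫₀^s g(t) dt`. -/
noncomputable def Gprim (g : ℝ → ℝ) (s : ℝ) : ℝ := ∫ t in (0 : ℝ)..s, g t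

/-- The Keller–Osserman condition: `G(s) > 0` for all large `s`, and
`∫_a^∞ G(s)^{-1/2} ds < ∞` for some `a > 0`. -/
def KellerOsserman (g : ℝ → ℝ) : Prop :=
  (∃ s₀ : ℝ, ∀ s, s₀ ≤ s → 0 < Gprim g s) ∧
    ∃ a : ℝ, 0 < a ∧ IntegrableOn (fun s => Gprim g s ^ (-(1 / 2) : ℝ)) (Set.Ioi a)

/-- The open cone with vertex `0` and opening `S ⊆ S^{N-1}`. -/
def coneOf {N : ℕ} (S : Set (EuclideanSpace ℝ (Fin N))) : Set (EuclideanSpace ℝ (Fin N)) :=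
  {x | x ≠ 0 ∧ ‖x‖⁻¹ • x ∈ S}

/-- `u` is a (distributional) solution of `-Δu + u^q = 0` in `D`. -/
def IsPowSolutionOn {N : ℕ} (D : Set (EuclideanSpace ℝ (Fin N))) (q : ℝ)
    (u : EuclideanSpace ℝ (Fin N) → ℝ) : Prop :=
  LocallyIntegrableOn u D ∧ LocallyIntegrableOn (fun x => u x ^ q) D ∧
    ∀ φ, IsTest D φ → (∫ x in D, (-(u x) * lap φ x + u x ^ q * φ x)) = 0

/-- The class `𝒰` of nonnegative solutions of `-Δu + u^q = 0` in the cone `C_S`, extending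
continuously to `C̄_S ∖ {0}` and vanishing on `∂C_S ∖ {0}`. -/
def InUClass {N : ℕ} (S : Set (EuclideanSpace ℝ (Fin N))) (q : ℝ)
    (u : EuclideanSpace ℝ (Fin N) → ℝ) : Prop :=
  IsPowSolutionOn (coneOf S) q u ∧ (∀ x ∈ coneOf S, 0 ≤ u x) ∧
    ContinuousOn u (closure (coneOf S) \ {0}) ∧ ∀ x ∈ frontier (coneOf S) \ {0}, u x = 0

/-! For `a > 0` the rescaling `u ↦ a ^ (2 / (q - 1)) * u (a • ·)` maps the class `𝒰` into
itself: the cone is invariant under dilations, and both `Δu` and `u ^ q` pick up the same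
factor `a ^ (2 q / (q - 1))`. Maximality of `U` applied to the rescalings by `a` and by `a⁻¹`
gives the two opposite inequalities. -/

open Pointwise

section Scaling

variable {N : ℕ}

lemma lap_comp_smul (φ : EuclideanSpace ℝ (Fin N) → ℝ) (c : ℝ)
    (x : EuclideanSpace ℝ (Fin N)) :
    lap (fun y => φ (c • y)) x = c ^ 2 * lap φ (c • x) := by
  simp only [lap, Finset.mul_sum]
  refine Finset.sum_congr rfl fun i _ => ?_
  have hinner : (fun y => fderiv ℝ (fun z => φ (c • z)) y (EuclideanSpace.single i 1)) =
      c • fun y => fderiv ℝ φ (c • y) (EuclideanSpace.single i 1) := by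
    funext y
    simp [fderiv_comp_smul (f := φ)]
  rw [hinner, fderiv_const_smul_field, Pi.smul_apply,
    fderiv_comp_smul (f := fun z => fderiv ℝ φ z (EuclideanSpace.single i 1))]
  simp only [FunLike.coe_smul, Pi.smul_apply, smul_eq_mul]
  ring

lemma IsTest.comp_inv_smul {D : Set (EuclideanSpace ℝ (Fin N))}
    {φ : EuclideanSpace ℝ (Fin N) → ℝ} (hφ : IsTest D φ) {a : ℝ} (ha : a ≠ 0) :
    IsTest (a • D) (fun y => φ (a⁻¹ • y)) := by
  obtain ⟨hsmooth, hcompact, hsupp⟩ := hφ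
  refine ⟨hsmooth.comp (contDiff_const_smul a⁻¹), hcompact.comp_smul (inv_ne_zero ha), ?_⟩
  rw [tsupport, support_comp_inv_smul₀ ha, closure_smul₀' ha]
  exact smul_set_mono hsupp

lemma two_div_sub_one_mul_self {q : ℝ} (hq : q ≠ 1) : 2 / (q - 1) * q = 2 / (q - 1) + 2 := by
  have : q - 1 ≠ 0 := sub_ne_zero.2 hq
  field_simp
  ring

lemma IsPowSolutionOn.comp_smul {D : Set (EuclideanSpace ℝ (Fin N))} (hD : IsOpen D)
    {q : ℝ} (hq : 1 < q) {u : EuclideanSpace ℝ (Fin N) → ℝ} (hu : IsPowSolutionOn D q u)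
    (hu_cont : ContinuousOn u D) (hu_nonneg : ∀ x ∈ D, 0 ≤ u x) {a : ℝ} (ha : 0 < a) :
    IsPowSolutionOn (a⁻¹ • D) q (fun x => a ^ (2 / (q - 1)) * u (a • x)) := by
  set p := 2 / (q - 1)
  have hD' : IsOpen (a⁻¹ • D) := hD.smul₀ (inv_ne_zero ha.ne')
  have hmaps : MapsTo (a • ·) (a⁻¹ • D) D := fun x hx => by
    simpa [mem_smul_set_iff_inv_smul_mem₀ (inv_ne_zero ha.ne')] using hx
  have hv_cont : ContinuousOn (fun x => a ^ p * u (a • x)) (a⁻¹ • D) :=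
    continuousOn_const.mul (hu_cont.comp (continuous_const_smul a).continuousOn hmaps)
  refine ⟨hv_cont.locallyIntegrableOn hD'.measurableSet,
    (hv_cont.rpow_const fun _ _ => Or.inr (by linarith)).locallyIntegrableOn hD'.measurableSet,
    fun φ hφ => ?_⟩
  set χ : EuclideanSpace ℝ (Fin N) → ℝ := fun y => φ (a⁻¹ • y)
  have hχ : IsTest D χ := by
    simpa only [smul_inv_smul₀ ha.ne'] using hφ.comp_inv_smul ha.ne'
  have hφχ : φ = fun x => χ (a • x) := by
    funext x
    simp [χ, inv_smul_smul₀ ha.ne']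
  set g : EuclideanSpace ℝ (Fin N) → ℝ := fun y => -(u y) * lap χ y + u y ^ q * χ y
  have hpointwise : EqOn
      (fun x => -(a ^ p * u (a • x)) * lap φ x + (a ^ p * u (a • x)) ^ q * φ x)
      (fun x => a ^ (p * q) * g (a • x)) (a⁻¹ • D) := by
    intro x hx
    have hpow : a ^ (p * q) = a ^ p * a ^ 2 := by
      rw [two_div_sub_one_mul_self hq.ne', Real.rpow_add ha, Real.rpow_two]
    have hmul : (a ^ p * u (a • x)) ^ q = a ^ (p * q) * u (a • x) ^ q := by
      rw [Real.mul_rpow (Real.rpow_nonneg ha.le p) (hu_nonneg _ (hmaps hx)),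
        ← Real.rpow_mul ha.le]
    simp only [g]
    rw [hmul, hφχ, lap_comp_smul, hpow]
    ring
  rw [setIntegral_congr_fun hD'.measurableSet hpointwise, integral_const_mul,
    Measure.setIntegral_comp_smul_of_pos _ _ _ ha, smul_inv_smul₀ ha.ne', hu.2.2 χ hχ,
    smul_zero, mul_zero]

lemma smul_mem_frontier {s : Set (EuclideanSpace ℝ (Fin N))} {a : ℝ} (ha : a ≠ 0)
    (hs : a • s = s) {x : EuclideanSpace ℝ (Fin N)} (hx : x ∈ frontier s) :
    a • x ∈ frontier s := by
  have : a • frontier s = frontier s := by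
    unfold frontier
    rw [smul_set_sdiff₀ ha, ← closure_smul₀' ha, ← interior_smul₀ ha, hs]
  exact this ▸ smul_mem_smul_set hx

end Scaling

section Cone

variable {N : ℕ} {S : Set (EuclideanSpace ℝ (Fin N))}

lemma smul_mem_coneOf_iff {a : ℝ} (ha : 0 < a) {x : EuclideanSpace ℝ (Fin N)} :
    a • x ∈ coneOf S ↔ x ∈ coneOf S := by
  rcases eq_or_ne x 0 with rfl | hx
  · simp
  have hdir : ‖a • x‖⁻¹ • a • x = ‖x‖⁻¹ • x := by
    rw [norm_smul, Real.norm_of_nonneg ha.le, smul_smul, mul_inv_rev, mul_assoc,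
      inv_mul_cancel₀ ha.ne', mul_one]
  simp [coneOf, hx, ha.ne', hdir]

lemma smul_coneOf {a : ℝ} (ha : 0 < a) : a • coneOf S = coneOf S := by
  ext x
  rw [mem_smul_set_iff_inv_smul_mem₀ ha.ne']
  exact smul_mem_coneOf_iff (inv_pos.2 ha)

lemma isOpen_coneOf {V : Set (EuclideanSpace ℝ (Fin N))} (hV : IsOpen V) :
    IsOpen (coneOf (V ∩ sphere 0 1)) := by
  have hcone : coneOf (V ∩ sphere 0 1) = {0}ᶜ ∩ (fun x => ‖x‖⁻¹ • x) ⁻¹' V := by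
    ext x
    simp only [coneOf, mem_ofPred_eq, mem_inter_iff, mem_compl_iff, mem_singleton_iff,
      mem_preimage, mem_sphere_zero_iff_norm, norm_smul, norm_inv, norm_norm]
    constructor
    · rintro ⟨hx, hxV, -⟩
      exact ⟨hx, hxV⟩
    · rintro ⟨hx, hxV⟩
      exact ⟨hx, hxV, inv_mul_cancel₀ (norm_ne_zero_iff.2 hx)⟩
  rw [hcone]
  refine ContinuousOn.isOpen_inter_preimage ?_ isOpen_compl_singleton hV
  exact (continuousOn_id.norm.inv₀ fun x hx => norm_ne_zero_iff.2 hx).smul continuousOn_id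

lemma InUClass.comp_smul (hS : IsOpen (coneOf S)) {q : ℝ} (hq : 1 < q)
    {u : EuclideanSpace ℝ (Fin N) → ℝ} (hu : InUClass S q u) {a : ℝ} (ha : 0 < a) :
    InUClass S q (fun x => a ^ (2 / (q - 1)) * u (a • x)) := by
  obtain ⟨hsol, hnonneg, hcont, hzero⟩ := hu
  have hcone : a⁻¹ • coneOf S = coneOf S := smul_coneOf (inv_pos.2 ha)
  have hmaps : MapsTo (a • ·) (closure (coneOf S) \ {0}) (closure (coneOf S) \ {0}) := by
    rintro x ⟨hx, hx0⟩
    refine ⟨?_, by simpa [ha.ne'] using hx0⟩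
    rw [← smul_coneOf ha (S := S), closure_smul₀' ha.ne']
    exact smul_mem_smul_set hx
  have hcont_cone : ContinuousOn u (coneOf S) :=
    hcont.mono fun x hx => ⟨subset_closure hx, hx.1⟩
  refine ⟨hcone ▸ hsol.comp_smul hS hq hcont_cone hnonneg ha,
    fun x hx => mul_nonneg (Real.rpow_nonneg ha.le _) (hnonneg _ ((smul_mem_coneOf_iff ha).2 hx)),
    continuousOn_const.mul (hcont.comp (continuous_const_smul a).continuousOn hmaps),
    fun x ⟨hx, hx0⟩ => ?_⟩
  have hax : a • x ∈ frontier (coneOf S) \ {0} :=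
    ⟨smul_mem_frontier ha.ne' (smul_coneOf ha) hx, by simpa [ha.ne'] using hx0⟩
  simp [hzero _ hax]

end Cone

theorem statement6_general (N : ℕ) (q : ℝ) (hq : 1 < q)
    (S : Set (EuclideanSpace ℝ (Fin N)))
    (hSopen : ∃ V, IsOpen V ∧ S = V ∩ sphere (0 : EuclideanSpace ℝ (Fin N)) 1)
    (U : EuclideanSpace ℝ (Fin N) → ℝ) (hU : InUClass S q U)
    (hmax : ∀ u, InUClass S q u → ∀ x ∈ coneOf S, u x ≤ U x) :
    (∀ a : ℝ, 0 < a → ∀ x ∈ coneOf S, U x = a ^ (2 / (q - 1)) * U (a • x)) ∧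
    ∀ x ∈ coneOf S, U x = ‖x‖ ^ (-(2 / (q - 1))) * U (‖x‖⁻¹ • x) := by
  obtain ⟨V, hV, hSV⟩ := hSopen
  have hC : IsOpen (coneOf S) := hSV ▸ isOpen_coneOf hV
  have hscale :
      ∀ a : ℝ, 0 < a → ∀ x ∈ coneOf S, U x = a ^ (2 / (q - 1)) * U (a • x) := by
    intro a ha x hx
    have hle := hmax _ (hU.comp_smul hC hq ha) x hx
    have hge := hmax _ (hU.comp_smul hC hq (inv_pos.2 ha)) (a • x)
      ((smul_mem_coneOf_iff ha).2 hx)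
    rw [inv_smul_smul₀ ha.ne', Real.inv_rpow ha.le,
      inv_mul_le_iff₀ (Real.rpow_pos_of_pos ha _)] at hge
    exact le_antisymm hge hle
  refine ⟨hscale, fun x hx => ?_⟩
  have hnorm := norm_pos_iff.2 hx.1
  rw [Real.rpow_neg hnorm.le, ← Real.inv_rpow hnorm.le]
  exact hscale _ (inv_pos.2 hnorm) x hx

/-- Identity (5.18) in the proof of Theorem 5.5: homogeneity of the maximal solution of
`-Δu + u^q = 0` in the cone `C_S` over a relatively open Lipschitz spherical domain `S`
(here the Lipschitz regularity of `S` is expressed by a local Lipschitz graph representation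
of the boundary of `C_S` away from the vertex):
`U(x) = a^{2/(q-1)} U(ax)` for all `a > 0`, equivalently
`U(x) = |x|^{-2/(q-1)} U(x/|x|)`. -/
theorem statement6 (N : ℕ) (hN : 2 ≤ N) (q : ℝ) (hq : 1 < q)
    (S : Set (EuclideanSpace ℝ (Fin N)))
    (hSsub : S ⊆ sphere (0 : EuclideanSpace ℝ (Fin N)) 1)
    (hSopen : ∃ V, IsOpen V ∧ S = V ∩ sphere (0 : EuclideanSpace ℝ (Fin N)) 1)
    (hSconn : IsConnected S)
    (hSlip : ∀ y ∈ frontier (coneOf S), y ≠ 0 →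
      ∃ r₁ lam₁ : ℝ, 0 < r₁ ∧ 0 < lam₁ ∧ ∃ ψ T, GraphRep r₁ lam₁ (coneOf S) y ψ T)
    (U : EuclideanSpace ℝ (Fin N) → ℝ) (hU : InUClass S q U)
    (hmax : ∀ u, InUClass S q u → ∀ x ∈ coneOf S, u x ≤ U x) :
    (∀ a : ℝ, 0 < a → ∀ x ∈ coneOf S, U x = a ^ (2 / (q - 1)) * U (a • x)) ∧
    ∀ x ∈ coneOf S, U x = ‖x‖ ^ (-(2 / (q - 1))) * U (‖x‖⁻¹ • x) :=
  statement6_general N q hq S hSopen U hU hmax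
end

section
/- Let N ≥ 2, let k ∈ {1, …, N−1} be an integer, let κ > 0, q > 1 and R > 0. Then the integral ∫₀^R ∫₀^R (s² + t²)^{−q(N−2+2κ)/2} s^{(q+1)κ + k − 1} t^{N−k−1} dt ds is finite if and only if q < (κ + N)/(κ + N − 2). (Reduced form of Proposition 6.2: the criterion for admissibility of a Dirac mass on the edge of a k-dihedron, identifying the critical exponent q_c = (κ₊ + N)/(κ₊ + N − 2).) -/
/-!
The integrand `(s² + t²)^(-a) s^b t^c` is homogeneous of degree `b + c - 2a`,
so (for `b, c > -1`) the integral over `(0, R)²` is finite iff `b + c - 2a > -2`.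
If so, split `2a = α + β` with `α < b + 1` and `β < c + 1`: since `s, t ≤ √(s² + t²)`, the
integrand is at most `s^(b - α) t^(c - β)`, a product of integrable powers. Conversely, on
`t < s` we have `s² + t² ≤ 2s²`, so the inner integral is at least a multiple of
`s^(b + c + 1 - 2a)`, which is integrable at `0` only if `b + c + 1 - 2a > -1`.
For the theorem, `2a = q(N - 2 + 2κ)` and `b + c + 2 = (q + 1)κ + N`.
-/

open MeasureTheory Set ENNReal

theorem lintegral_Ioo_ofReal_rpow_lt_top_iff {p R : ℝ} (hR : 0 < R) :
    ∫⁻ s in Ioo 0 R, ENNReal.ofReal (s ^ p) < ⊤ ↔ -1 < p := by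
  have hnonneg : 0 ≤ᵐ[volume.restrict (Ioo 0 R)] fun s : ℝ => s ^ p :=
    ae_restrict_of_forall_mem measurableSet_Ioo fun s hs => Real.rpow_nonneg hs.1.le p
  rw [← hasFiniteIntegral_iff_ofReal hnonneg, ← intervalIntegral.integrableOn_Ioo_rpow_iff hR]
  exact ⟨fun h => ⟨by fun_prop, h⟩, fun h => h.2⟩

theorem lintegral_Ioo_ofReal_rpow {c s : ℝ} (hc : -1 < c) (hs : 0 ≤ s) :
    ∫⁻ t in Ioo 0 s, ENNReal.ofReal (t ^ c) = ENNReal.ofReal (s ^ (c + 1) / (c + 1)) := by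
  rcases hs.eq_or_lt with rfl | hs
  · simp [Real.zero_rpow (by linarith : c + 1 ≠ 0)]
  rw [← ofReal_integral_eq_lintegral_ofReal ((intervalIntegral.integrableOn_Ioo_rpow_iff hs).2 hc)
    (ae_restrict_of_forall_mem measurableSet_Ioo fun t ht => Real.rpow_nonneg ht.1.le c),
    ← integral_Ioc_eq_integral_Ioo, ← intervalIntegral.integral_of_le hs.le,
    integral_rpow (Or.inl hc), Real.zero_rpow (by linarith), sub_zero]

theorem rpow_sq_add_sq_neg_le {α β s t : ℝ} (hα : 0 ≤ α) (hβ : 0 ≤ β) (hs : 0 < s)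
    (ht : 0 < t) :
    (s ^ 2 + t ^ 2) ^ (-((α + β) / 2)) ≤ s ^ (-α) * t ^ (-β) := by
  have hsq {x : ℝ} (hx : 0 < x) (γ : ℝ) : x ^ (-γ) = (x ^ 2) ^ (-(γ / 2)) := by
    rw [← Real.rpow_natCast_mul hx.le]; push_cast; ring_nf
  rw [add_div, neg_add, Real.rpow_add (by positivity), hsq hs, hsq ht]
  gcongr ?_ * ?_
  · exact Real.rpow_le_rpow_of_nonpos (by positivity) (by nlinarith) (by linarith)
  · exact Real.rpow_le_rpow_of_nonpos (by positivity) (by nlinarith) (by linarith)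

theorem exists_exponent_split {a b c : ℝ} (ha : 0 ≤ a) (hb : -1 < b) (hc : -1 < c)
    (h : 2 * a < b + c + 2) :
    ∃ α β : ℝ, 0 ≤ α ∧ 0 ≤ β ∧ α + β = 2 * a ∧ α < b + 1 ∧ β < c + 1 := by
  by_cases hab : 2 * a < b + 1
  · exact ⟨2 * a, 0, by linarith, le_rfl, by ring, hab, by linarith⟩
  by_cases hac : 2 * a < c + 1
  · exact ⟨0, 2 * a, le_rfl, by linarith, by ring, by linarith, hac⟩
  exact ⟨a + (b - c) / 2, a - (b - c) / 2, by linarith, by linarith, by ring, by linarith,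
    by linarith⟩

noncomputable def edgeIntegral (a b c R : ℝ) : ℝ≥0∞ :=
  ∫⁻ s in Ioo 0 R, ∫⁻ t in Ioo 0 R, ENNReal.ofReal ((s ^ 2 + t ^ 2) ^ (-a) * s ^ b * t ^ c)

section

variable {a b c R : ℝ}

theorem edgeIntegral_lt_top (hR : 0 < R) (ha : 0 ≤ a) (hb : -1 < b) (hc : -1 < c)
    (h : 2 * a < b + c + 2) : edgeIntegral a b c R < ⊤ := by
  obtain ⟨α, β, hα, hβ, hαβ, hαb, hβc⟩ := exists_exponent_split ha hb hc h
  have hpoint {s t : ℝ} (hs : 0 < s) (ht : 0 < t) :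
      (s ^ 2 + t ^ 2) ^ (-a) * s ^ b * t ^ c ≤ s ^ (b - α) * t ^ (c - β) := by
    have hsplit := rpow_sq_add_sq_neg_le hα hβ hs ht
    rw [hαβ, mul_div_cancel_left₀ a two_ne_zero] at hsplit
    rw [sub_eq_neg_add, sub_eq_neg_add, Real.rpow_add hs, Real.rpow_add ht]
    calc (s ^ 2 + t ^ 2) ^ (-a) * s ^ b * t ^ c
        ≤ s ^ (-α) * t ^ (-β) * s ^ b * t ^ c := by gcongr
      _ = s ^ (-α) * s ^ b * (t ^ (-β) * t ^ c) := by ring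
  calc edgeIntegral a b c R
      ≤ ∫⁻ s in Ioo 0 R, ∫⁻ t in Ioo 0 R,
          ENNReal.ofReal (s ^ (b - α)) * ENNReal.ofReal (t ^ (c - β)) := by
        refine setLIntegral_mono' measurableSet_Ioo fun s hs =>
          setLIntegral_mono' measurableSet_Ioo fun t ht => ?_
        rw [← ENNReal.ofReal_mul (Real.rpow_nonneg hs.1.le _)]
        exact ENNReal.ofReal_le_ofReal (hpoint hs.1 ht.1)
    _ = (∫⁻ s in Ioo 0 R, ENNReal.ofReal (s ^ (b - α))) *
          ∫⁻ t in Ioo 0 R, ENNReal.ofReal (t ^ (c - β)) := by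
        simp_rw [lintegral_const_mul _ (by fun_prop : Measurable fun t : ℝ =>
          ENNReal.ofReal (t ^ (c - β)))]
        exact lintegral_mul_const _ (by fun_prop)
    _ < ⊤ := ENNReal.mul_lt_top ((lintegral_Ioo_ofReal_rpow_lt_top_iff hR).2 (by linarith))
        ((lintegral_Ioo_ofReal_rpow_lt_top_iff hR).2 (by linarith))

theorem ofReal_mul_rpow_le_lintegral_Ioo {s : ℝ} (hs : s ∈ Ioo 0 R) (ha : 0 ≤ a)
    (hc : -1 < c) :
    ENNReal.ofReal (2 ^ (-a) / (c + 1)) * ENNReal.ofReal (s ^ (b + c + 1 - 2 * a)) ≤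
      ∫⁻ t in Ioo 0 R, ENNReal.ofReal ((s ^ 2 + t ^ 2) ^ (-a) * s ^ b * t ^ c) := by
  obtain ⟨hs, hsR⟩ := hs
  have hc1 : 0 < c + 1 := by linarith
  have hC : 0 ≤ (2 * s ^ 2) ^ (-a) * s ^ b := by positivity
  calc ENNReal.ofReal (2 ^ (-a) / (c + 1)) * ENNReal.ofReal (s ^ (b + c + 1 - 2 * a))
      = ENNReal.ofReal ((2 * s ^ 2) ^ (-a) * s ^ b) * ENNReal.ofReal (s ^ (c + 1) / (c + 1)) := by
        rw [← ENNReal.ofReal_mul (by positivity), ← ENNReal.ofReal_mul hC]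
        congr 1
        rw [show b + c + 1 - 2 * a = ((2 : ℕ) : ℝ) * (-a) + b + (c + 1) by push_cast; ring,
          Real.rpow_add hs, Real.rpow_add hs, Real.rpow_natCast_mul hs.le,
          Real.mul_rpow zero_le_two (by positivity)]
        ring
    _ = ∫⁻ t in Ioo 0 s,
          ENNReal.ofReal ((2 * s ^ 2) ^ (-a) * s ^ b) * ENNReal.ofReal (t ^ c) := by
        rw [lintegral_const_mul _ (by fun_prop), lintegral_Ioo_ofReal_rpow hc hs.le]
    _ ≤ ∫⁻ t in Ioo 0 s, ENNReal.ofReal ((s ^ 2 + t ^ 2) ^ (-a) * s ^ b * t ^ c) := by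
        refine setLIntegral_mono' measurableSet_Ioo fun t ⟨ht, hts⟩ => ?_
        rw [← ENNReal.ofReal_mul hC]
        have : (2 * s ^ 2) ^ (-a) ≤ (s ^ 2 + t ^ 2) ^ (-a) :=
          Real.rpow_le_rpow_of_nonpos (by positivity) (by nlinarith) (by linarith)
        gcongr
    _ ≤ ∫⁻ t in Ioo 0 R, ENNReal.ofReal ((s ^ 2 + t ^ 2) ^ (-a) * s ^ b * t ^ c) :=
        lintegral_mono_set (Ioo_subset_Ioo_right hsR.le)

theorem lt_of_edgeIntegral_lt_top (hR : 0 < R) (ha : 0 ≤ a) (hc : -1 < c)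
    (h : edgeIntegral a b c R < ⊤) : 2 * a < b + c + 2 := by
  have hlow : ENNReal.ofReal (2 ^ (-a) / (c + 1)) *
      ∫⁻ s in Ioo 0 R, ENNReal.ofReal (s ^ (b + c + 1 - 2 * a)) ≤ edgeIntegral a b c R := by
    rw [← lintegral_const_mul _ (by fun_prop)]
    exact setLIntegral_mono' measurableSet_Ioo fun s hs => ofReal_mul_rpow_le_lintegral_Ioo hs ha hc
  have hfin := ENNReal.lt_top_of_mul_ne_top_right (hlow.trans_lt h).ne
    (ENNReal.ofReal_pos.2 (div_pos (by positivity) (by linarith))).ne'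
  linarith [(lintegral_Ioo_ofReal_rpow_lt_top_iff hR).1 hfin]

theorem edgeIntegral_lt_top_iff (hR : 0 < R) (ha : 0 ≤ a) (hb : -1 < b) (hc : -1 < c) :
    edgeIntegral a b c R < ⊤ ↔ 2 * a < b + c + 2 :=
  ⟨lt_of_edgeIntegral_lt_top hR ha hc, edgeIntegral_lt_top hR ha hb hc⟩

end

theorem statement7_general (N k : ℕ) (hN : 2 ≤ N) (hkN : k ≤ N - 1)
    (κ q R : ℝ) (hκ : 0 < κ) (hq : 1 < q) (hR : 0 < R) :
    (∫⁻ s in Ioo (0 : ℝ) R, ∫⁻ t in Ioo (0 : ℝ) R,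
        ENNReal.ofReal ((s ^ 2 + t ^ 2) ^ (-(q * ((N : ℝ) - 2 + 2 * κ)) / 2) *
          s ^ ((q + 1) * κ + (k : ℝ) - 1) * t ^ ((N : ℝ) - (k : ℝ) - 1))) < ⊤ ↔
      q < (κ + N) / (κ + N - 2) := by
  have hN' : (2 : ℝ) ≤ N := by exact_mod_cast hN
  have hkN' : (k : ℝ) + 1 ≤ N := by exact_mod_cast (by omega : k + 1 ≤ N)
  simp only [neg_div]
  rw [← edgeIntegral, edgeIntegral_lt_top_iff hR (by positivity) (by nlinarith) (by linarith),
    lt_div_iff₀ (by linarith)]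
  constructor <;> intro h <;> linarith

/-- Reduced form of Proposition 6.2: the integral
`∫₀^R ∫₀^R (s² + t²)^{-q(N-2+2κ)/2} s^{(q+1)κ+k-1} t^{N-k-1} dt ds`
is finite if and only if `q < (κ + N)/(κ + N - 2)`; this identifies the critical
exponent `q_c` for admissibility of a Dirac mass on the edge of a `k`-dihedron. -/
theorem statement7 (N k : ℕ) (hN : 2 ≤ N) (hk1 : 1 ≤ k) (hkN : k ≤ N - 1)
    (κ q R : ℝ) (hκ : 0 < κ) (hq : 1 < q) (hR : 0 < R) :
    (∫⁻ s in Ioo (0 : ℝ) R, ∫⁻ t in Ioo (0 : ℝ) R,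
        ENNReal.ofReal ((s ^ 2 + t ^ 2) ^ (-(q * ((N : ℝ) - 2 + 2 * κ)) / 2) *
          s ^ ((q + 1) * κ + (k : ℝ) - 1) * t ^ ((N : ℝ) - (k : ℝ) - 1))) < ⊤ ↔
      q < (κ + N) / (κ + N - 2) :=
  statement7_general N k hN hkN κ q R hκ hq hR
end
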